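/- arXiv:1807.05171 — 3 statements merged into one kernel-verified Lean document; each statement's English description precedes it below -/
import Mathlib

section
/- Let A ∈ SL(2,ℝ), viewed as a complex matrix, have an eigenvalue λ with |λ| = 1 and λ ≠ ±1, and let v ∈ ℂ² be a corresponding eigenvector. Then ⟨Gv, v̄⟩ = 0 (where v̄ is the componentwise complex conjugate of v, also an eigenvector for λ̄), and ⟨Gv, v⟩ is a nonzero real number, where G = -iJ = [[0,i],[-i,0]] and ⟨·,·⟩ is the standard Hermitian product on ℂ². -/
open Matrix Complex

/-- The Hermitian matrix `G = -iJ = [[0,i],[-i,0]]`. -/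
noncomputable def Gmat : Matrix (Fin 2) (Fin 2) ℂ := !![0, Complex.I; -Complex.I, 0]

/-- The standard Hermitian product on `ℂ²`, `⟨u,w⟩ = ∑ᵢ uᵢ conj(wᵢ)`. -/
noncomputable def herm (u w : Fin 2 → ℂ) : ℂ :=
  ∑ i, u i * (starRingEnd ℂ) (w i)

open ComplexConjugate

/-- For `A ∈ SL(2,ℝ)` with an eigenvalue `λ` on the unit circle, `λ ≠ ±1`,
and eigenvector `v`: the conjugate `v̄` is an eigenvector for `λ̄`,
`⟨Gv, v̄⟩ = 0`, and `⟨Gv, v⟩` is real and nonzero (the Krein sign of `λ` is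
the sign of this real number). -/
theorem krein_sign_wellDefined (A : Matrix (Fin 2) (Fin 2) ℝ) (hA : A.det = 1)
    (lam : ℂ) (habs : ‖lam‖ = 1) (h1 : lam ≠ 1) (h2 : lam ≠ -1)
    (v : Fin 2 → ℂ) (hv : v ≠ 0)
    (heig : (A.map (Complex.ofReal)).mulVec v = lam • v) :
    (A.map (Complex.ofReal)).mulVec (star v) = (starRingEnd ℂ) lam • star v ∧
    herm (Gmat.mulVec v) (star v) = 0 ∧
    (herm (Gmat.mulVec v) v).im = 0 ∧ herm (Gmat.mulVec v) v ≠ 0 := by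
  have hconj : (starRingEnd ℂ) lam ≠ lam := by
    intro h
    have him : lam.im = 0 := Complex.conj_eq_iff_im.mp h
    have hlre : lam = (lam.re : ℂ) := by
      apply Complex.ext <;> simp [him]
    rw [hlre] at habs h1 h2
    rw [Complex.norm_real, Real.norm_eq_abs] at habs
    rcases (abs_eq (by norm_num : (0:ℝ) ≤ 1)).mp habs with hr | hr
    · exact h1 (by rw [hr]; norm_num)
    · exact h2 (by rw [hr]; norm_num)
  have eq0 : (A 0 0 : ℂ) * v 0 + (A 0 1 : ℂ) * v 1 = lam * v 0 := by
    have := congrFun heig 0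
    simpa [Matrix.mulVec, Matrix.map_apply, dotProduct, Fin.sum_univ_two,
      Pi.smul_apply, smul_eq_mul] using this
  have eq1 : (A 1 0 : ℂ) * v 0 + (A 1 1 : ℂ) * v 1 = lam * v 1 := by
    have := congrFun heig 1
    simpa [Matrix.mulVec, Matrix.map_apply, dotProduct, Fin.sum_univ_two,
      Pi.smul_apply, smul_eq_mul] using this
  have ceq0 : (A 0 0 : ℂ) * conj (v 0) + (A 0 1 : ℂ) * conj (v 1)
      = conj lam * conj (v 0) := by
    have := congrArg (starRingEnd ℂ) eq0
    simpa [map_add, _root_.map_mul, Complex.conj_ofReal] using this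
  have ceq1 : (A 1 0 : ℂ) * conj (v 0) + (A 1 1 : ℂ) * conj (v 1)
      = conj lam * conj (v 1) := by
    have := congrArg (starRingEnd ℂ) eq1
    simpa [map_add, _root_.map_mul, Complex.conj_ofReal] using this
  have hermeq : herm (Gmat.mulVec v) v
      = Complex.I * (v 1 * conj (v 0)) - Complex.I * (v 0 * conj (v 1)) := by
    simp [herm, Gmat, Matrix.mulVec, dotProduct, Fin.sum_univ_two]
    ring
  refine ⟨?_, ?_, ?_, ?_⟩
  · funext i
    fin_cases i
    · simpa [Matrix.mulVec, Matrix.map_apply, dotProduct, Fin.sum_univ_two,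
        Pi.star_apply, Pi.smul_apply, smul_eq_mul] using ceq0
    · simpa [Matrix.mulVec, Matrix.map_apply, dotProduct, Fin.sum_univ_two,
        Pi.star_apply, Pi.smul_apply, smul_eq_mul] using ceq1
  · simp [herm, Gmat, Matrix.mulVec, dotProduct, Fin.sum_univ_two]
    ring
  · rw [hermeq]
    simp [Complex.sub_im, Complex.mul_im, Complex.mul_re]
    ring
  · rw [hermeq]
    intro h
    have h' : Complex.I * (v 1 * conj (v 0) - v 0 * conj (v 1)) = 0 := by
      linear_combination h
    have key : v 0 * conj (v 1) = v 1 * conj (v 0) :=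
      (sub_eq_zero.mp ((mul_eq_zero.mp h').resolve_left Complex.I_ne_zero)).symm
    have hcne : ∀ z : ℂ, z ≠ 0 → conj z ≠ 0 := by
      intro z hz hc
      exact hz (by simpa using congrArg (starRingEnd ℂ) hc)
    have hv0 : v 0 = 0 := by
      by_contra h0
      have h'' : ((starRingEnd ℂ) lam - lam) * (v 0 * conj (v 0)) = 0 := by
        linear_combination conj (v 0) * eq0 - v 0 * ceq0 + (A 0 1 : ℂ) * key
      rcases mul_eq_zero.mp h'' with hh | hh
      · exact hconj (sub_eq_zero.mp hh)
      · exact (mul_ne_zero h0 (hcne _ h0)) hh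
    have hv1 : v 1 = 0 := by
      by_contra h0
      have h'' : ((starRingEnd ℂ) lam - lam) * (v 1 * conj (v 1)) = 0 := by
        linear_combination conj (v 1) * eq1 - v 1 * ceq1 - (A 1 0 : ℂ) * key
      rcases mul_eq_zero.mp h'' with hh | hh
      · exact hconj (sub_eq_zero.mp hh)
      · exact (mul_ne_zero h0 (hcne _ h0)) hh
    apply hv
    funext i
    fin_cases i
    · simpa using hv0
    · simpa using hv1
end

section
/- Each of the open sets Sp(2)⁺ = {A ∈ SL(2,ℝ) : det(A−I) < 0} and Sp(2)⁻ = {A ∈ SL(2,ℝ) : det(A−I) > 0} is path connected, and every continuous loop contained in Sp(2)⁺ (respectively Sp(2)⁻) is null-homotopic in SL(2,ℝ). -/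
open Matrix

/-- `SL(2,ℝ) = Sp(2)` as a subspace of the 2×2 real matrices. -/
def SL2R : Type := {A : Matrix (Fin 2) (Fin 2) ℝ // A.det = 1}

noncomputable instance : TopologicalSpace SL2R :=
  instTopologicalSpaceSubtype

noncomputable section

namespace SP2Aux

/-- det(A - 1) = 2 - tr A for A in SL2. -/
lemma det_sub_one (A : Matrix (Fin 2) (Fin 2) ℝ) (h : A.det = 1) :
    (A - 1).det = 2 - (A 0 0 + A 1 1) := by
  rw [det_fin_two] at h ⊢
  simp [Matrix.sub_apply, Matrix.one_apply]
  linear_combination h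

/-- normalization of a positive determinant matrix to determinant one -/
def nrm (M : Matrix (Fin 2) (Fin 2) ℝ) : Matrix (Fin 2) (Fin 2) ℝ :=
  (Real.sqrt M.det)⁻¹ • M

lemma nrm_det {M : Matrix (Fin 2) (Fin 2) ℝ} (h : 0 < M.det) : (nrm M).det = 1 := by
  rw [nrm, det_smul]
  have hs : Real.sqrt M.det ≠ 0 := by positivity
  rw [Fintype.card_fin, inv_pow, Real.sq_sqrt h.le]
  field_simp

lemma nrm_one {M : Matrix (Fin 2) (Fin 2) ℝ} (h : M.det = 1) : nrm M = M := by
  rw [nrm, h, Real.sqrt_one, inv_one, one_smul]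

def mix (t : ℝ) (A E : Matrix (Fin 2) (Fin 2) ℝ) : Matrix (Fin 2) (Fin 2) ℝ :=
  (1 - t) • A + t • E

lemma mix_zero (A E : Matrix (Fin 2) (Fin 2) ℝ) : mix 0 A E = A := by
  simp [mix]

lemma mix_one (A E : Matrix (Fin 2) (Fin 2) ℝ) : mix 1 A E = E := by
  simp [mix]

lemma mix_det_one (t : ℝ) (A : Matrix (Fin 2) (Fin 2) ℝ) (h : A.det = 1) :
    (mix t A 1).det = 1 + t * (1 - t) * (A 0 0 + A 1 1 - 2) := by
  rw [det_fin_two] at h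
  rw [mix, det_fin_two]
  simp [Matrix.add_apply, Matrix.smul_apply, Matrix.one_apply]
  linear_combination (1-t)^2 * h

lemma mix_det_negone (t : ℝ) (A : Matrix (Fin 2) (Fin 2) ℝ) (h : A.det = 1) :
    (mix t A (-1)).det = 1 - t * (1 - t) * (A 0 0 + A 1 1 + 2) := by
  rw [det_fin_two] at h
  rw [mix, det_fin_two]
  simp [Matrix.add_apply, Matrix.smul_apply, Matrix.one_apply, Matrix.neg_apply]
  linear_combination (1-t)^2 * h

lemma mix_det_one_pos {t : ℝ} (ht : t ∈ Set.Icc (0:ℝ) 1) (A : Matrix (Fin 2) (Fin 2) ℝ)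
    (h : A.det = 1) (htr : 2 < A 0 0 + A 1 1) : 0 < (mix t A 1).det := by
  rw [mix_det_one t A h]
  nlinarith [ht.1, ht.2, mul_nonneg ht.1 (sub_nonneg.2 ht.2)]

lemma mix_det_negone_pos {t : ℝ} (ht : t ∈ Set.Icc (0:ℝ) 1) (A : Matrix (Fin 2) (Fin 2) ℝ)
    (h : A.det = 1) (htr : A 0 0 + A 1 1 < 2) : 0 < (mix t A (-1)).det := by
  rw [mix_det_negone t A h]
  nlinarith [ht.1, ht.2, sq_nonneg (1 - 2*t), mul_nonneg (mul_nonneg ht.1 (sub_nonneg.2 ht.2))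
    (sub_nonneg.2 htr.le)]

lemma mix_trace_negone {t : ℝ} (ht : t ∈ Set.Icc (0:ℝ) 1) (A : Matrix (Fin 2) (Fin 2) ℝ)
    (h : A.det = 1) (htr : A 0 0 + A 1 1 < 2) :
    (mix t A (-1)) 0 0 + (mix t A (-1)) 1 1 < 2 * Real.sqrt (mix t A (-1)).det := by
  have hd : 0 < (mix t A (-1)).det := mix_det_negone_pos ht A h htr
  have hs : 0 < Real.sqrt (mix t A (-1)).det := Real.sqrt_pos.2 hd
  have htrM : (mix t A (-1)) 0 0 + (mix t A (-1)) 1 1 = (1 - t) * (A 0 0 + A 1 1) - 2 * t := by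
    simp [mix, Matrix.add_apply, Matrix.smul_apply, Matrix.one_apply, Matrix.neg_apply]
    ring
  rcases lt_or_ge ((1 - t) * (A 0 0 + A 1 1) - 2 * t) 0 with hneg | hpos
  · rw [htrM]; linarith
  · have ht1 : t < 1 := by
      rcases eq_or_lt_of_le ht.2 with rfl | h1
      · simp at hpos; linarith
      · exact h1
    have hT : -2 < A 0 0 + A 1 1 := by nlinarith [ht.1]
    have hkey : ((1 - t) * (A 0 0 + A 1 1) - 2 * t)^2 < 4 * (mix t A (-1)).det := by
      rw [mix_det_negone t A h]
      nlinarith [mul_pos (mul_pos (sub_pos.2 ht1) (sub_pos.2 ht1))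
        (mul_pos (by linarith : (0:ℝ) < 2 - (A 0 0 + A 1 1))
          (by linarith : (0:ℝ) < 2 + (A 0 0 + A 1 1)))]
    rw [htrM]
    nlinarith [Real.sq_sqrt hd.le, hs, hpos, hkey]

def Splus : Set SL2R := {A : SL2R | (A.val - 1).det < 0}
def Sminus : Set SL2R := {A : SL2R | (A.val - 1).det > 0}

/-- The inverse Cayley transform, written in coordinates on trace-zero matrices. -/
def Psi (x u v : ℝ) : Matrix (Fin 2) (Fin 2) ℝ :=
  (x^2 + u^2 - v^2 - 1)⁻¹ • !![(x+1)^2 + u^2 - v^2, 2*(u+v); 2*(u-v), (1-x)^2 + u^2 - v^2]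

lemma Psi_det {x u v : ℝ} (h : 1 < x^2 + u^2 - v^2) : (Psi x u v).det = 1 := by
  have h0 : x^2 + u^2 - v^2 - 1 ≠ 0 := by nlinarith
  rw [Psi, det_fin_two]
  simp [Matrix.smul_apply]
  field_simp
  ring

lemma Psi_mem {x u v : ℝ} (h : 1 < x^2 + u^2 - v^2) : (Psi x u v - 1).det < 0 := by
  have h0 : x^2 + u^2 - v^2 - 1 ≠ 0 := by nlinarith
  rw [Psi, det_fin_two]
  simp [Matrix.smul_apply, Matrix.sub_apply, Matrix.one_apply]
  have key : ((x^2+u^2-v^2-1)⁻¹ * ((x+1)^2 + u^2 - v^2) - 1) *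
      ((x^2+u^2-v^2-1)⁻¹ * ((1-x)^2 + u^2 - v^2) - 1) -
      (x^2+u^2-v^2-1)⁻¹ * (2*(u+v)) * ((x^2+u^2-v^2-1)⁻¹ * (2*(u-v)))
      = -4 / (x^2+u^2-v^2-1) := by
    field_simp
    ring
  have hneg : -4 / (x^2+u^2-v^2-1) < 0 :=
    div_neg_of_neg_of_pos (by norm_num) (by linarith)
  linarith [key, hneg]

/-- Element of SL2R from Cayley coordinates. -/
def PsiS (x u v : ℝ) (h : 1 < x^2 + u^2 - v^2) : SL2R := ⟨Psi x u v, Psi_det h⟩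

lemma PsiS_mem {x u v : ℝ} (h : 1 < x^2 + u^2 - v^2) : PsiS x u v h ∈ Splus := Psi_mem h

lemma Psi_continuous {X : Type*} [TopologicalSpace X] {f g k : X → ℝ}
    (hf : Continuous f) (hg : Continuous g) (hk : Continuous k)
    (h : ∀ p, 1 < (f p)^2 + (g p)^2 - (k p)^2) :
    Continuous fun p => Psi (f p) (g p) (k p) := by
  unfold Psi
  apply Continuous.fun_smul
  · apply Continuous.inv₀
    · fun_prop
    · intro p
      intro hn
      nlinarith [h p]
  · apply continuous_matrix
    intro i j
    fin_cases i <;> fin_cases j <;> simp <;> fun_prop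

/-- A continuous family of Cayley coordinates staying in the region gives JoinedIn. -/
lemma joinedIn_psi {f g k : ℝ → ℝ} (hf : Continuous f) (hg : Continuous g)
    (hk : Continuous k) (h : ∀ t : ℝ, t ∈ Set.Icc (0:ℝ) 1 → 1 < (f t)^2 + (g t)^2 - (k t)^2) :
    JoinedIn Splus (PsiS (f 0) (g 0) (k 0) (h 0 (by norm_num)))
      (PsiS (f 1) (g 1) (k 1) (h 1 (by norm_num))) := by
  have hmem : ∀ t : unitInterval, 1 < (f t)^2 + (g t)^2 - (k t)^2 := fun t => h t.1 t.2
  have hcont : Continuous fun t : unitInterval => PsiS (f t) (g t) (k t) (hmem t) := by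
    apply Continuous.subtype_mk
    exact Psi_continuous (hf.comp continuous_subtype_val) (hg.comp continuous_subtype_val)
      (hk.comp continuous_subtype_val) hmem
  exact ⟨{ toFun := fun t => PsiS (f t) (g t) (k t) (hmem t),
           continuous_toFun := hcont,
           source' := rfl, target' := rfl }, fun t => PsiS_mem (hmem t)⟩

/-- variant with endpoint rewriting -/
lemma joinedIn_psi' {f g k : ℝ → ℝ} (hf : Continuous f) (hg : Continuous g)
    (hk : Continuous k) (h : ∀ t : ℝ, t ∈ Set.Icc (0:ℝ) 1 → 1 < (f t)^2 + (g t)^2 - (k t)^2)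
    {x₀ u₀ v₀ x₁ u₁ v₁ : ℝ}
    (hx0 : f 0 = x₀) (hu0 : g 0 = u₀) (hv0 : k 0 = v₀)
    (hx1 : f 1 = x₁) (hu1 : g 1 = u₁) (hv1 : k 1 = v₁)
    (H0 : 1 < x₀^2 + u₀^2 - v₀^2) (H1 : 1 < x₁^2 + u₁^2 - v₁^2) :
    JoinedIn Splus (PsiS x₀ u₀ v₀ H0) (PsiS x₁ u₁ v₁ H1) := by
  subst hx0; subst hu0; subst hv0; subst hx1; subst hu1; subst hv1
  exact joinedIn_psi hf hg hk h

lemma base_q : (1:ℝ) < 3^2 + 0^2 - 0^2 := by norm_num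

/-- Every point of the Cayley chart region is joined in Splus to the base point. -/
lemma joined_to_base (x u v : ℝ) (h : 1 < x^2 + u^2 - v^2) :
    JoinedIn Splus (PsiS x u v h) (PsiS 3 0 0 base_q) := by
  have h2 : 1 < x^2 + u^2 - (0:ℝ)^2 := by nlinarith [sq_nonneg v]
  -- step 1 : shrink v to 0
  have s1 : JoinedIn Splus (PsiS x u v h) (PsiS x u 0 h2) := by
    refine joinedIn_psi' (f := fun _ => x) (g := fun _ => u) (k := fun t => (1-t)*v)
      continuous_const continuous_const (by fun_prop) ?_ rfl rfl
      (by show (1-(0:ℝ))*v = v; ring) rfl rfl (by show (1-(1:ℝ))*v = 0; ring) h h2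
    intro t ht
    nlinarith [mul_nonneg (mul_nonneg ht.1 (by linarith [ht.2] : (0:ℝ) ≤ 2 - t)) (sq_nonneg v)]
  -- the radius
  set r := Real.sqrt (x^2 + u^2) with hrdef
  have hxu : (0:ℝ) ≤ x^2 + u^2 := by positivity
  have hr2 : r^2 = x^2 + u^2 := Real.sq_sqrt hxu
  have hr : 1 < r := by
    rw [hrdef]
    rw [show (1:ℝ) = Real.sqrt 1 by rw [Real.sqrt_one]]
    apply Real.sqrt_lt_sqrt (by norm_num)
    nlinarith [sq_nonneg v]
  have hrq : (1:ℝ) < r^2 + 0^2 - 0^2 := by nlinarith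
  -- the angle
  have hrpos : (0:ℝ) < r := by linarith
  have hθ : ∃ θ : ℝ, r * Real.cos θ = x ∧ r * Real.sin θ = u := by
    have hb1 : -1 ≤ x / r := by
      rw [le_div_iff₀ hrpos]
      nlinarith [sq_nonneg (x + r), hr2, sq_nonneg u, hrpos]
    have hb2 : x / r ≤ 1 := by
      rw [div_le_iff₀ hrpos]
      nlinarith [sq_nonneg (x - r), hr2, sq_nonneg u, hrpos]
    have hsin : Real.sin (Real.arccos (x/r)) = Real.sqrt (1 - (x/r)^2) := Real.sin_arccos _
    have h1mx : 1 - (x/r)^2 = (u/r)^2 := by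
      field_simp
      nlinarith [hr2]
    rcases le_or_gt 0 u with hu | hu
    · refine ⟨Real.arccos (x/r), ?_, ?_⟩
      · rw [Real.cos_arccos hb1 hb2]; field_simp
      · rw [hsin, h1mx, Real.sqrt_sq_eq_abs, abs_of_nonneg (by positivity)]
        field_simp
    · refine ⟨-Real.arccos (x/r), ?_, ?_⟩
      · rw [Real.cos_neg, Real.cos_arccos hb1 hb2]; field_simp
      · rw [Real.sin_neg, hsin, h1mx, Real.sqrt_sq_eq_abs,
          abs_of_nonpos (by apply div_nonpos_of_nonpos_of_nonneg hu.le hrpos.le)]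
        field_simp
  obtain ⟨θ, hcos, hsin⟩ := hθ
  -- step 2 : rotate to the positive x-axis
  have s2 : JoinedIn Splus (PsiS x u 0 h2) (PsiS r 0 0 hrq) := by
    refine joinedIn_psi' (f := fun t => r * Real.cos ((1-t)*θ))
      (g := fun t => r * Real.sin ((1-t)*θ)) (k := fun _ => (0:ℝ))
      (by fun_prop) (by fun_prop) continuous_const ?_
      (by show r * Real.cos ((1-(0:ℝ))*θ) = x
          rw [show (1-(0:ℝ))*θ = θ by ring]; exact hcos)
      (by show r * Real.sin ((1-(0:ℝ))*θ) = u
          rw [show (1-(0:ℝ))*θ = θ by ring]; exact hsin) rfl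
      (by show r * Real.cos ((1-(1:ℝ))*θ) = r
          rw [show (1-(1:ℝ))*θ = 0 by ring, Real.cos_zero]; ring)
      (by show r * Real.sin ((1-(1:ℝ))*θ) = 0
          rw [show (1-(1:ℝ))*θ = 0 by ring, Real.sin_zero]; ring) rfl h2 hrq
    intro t ht
    nlinarith [Real.sin_sq_add_cos_sq ((1-t)*θ), hr]
  -- step 3 : slide along the x-axis to 3
  have s3 : JoinedIn Splus (PsiS r 0 0 hrq) (PsiS 3 0 0 base_q) := by
    refine joinedIn_psi' (f := fun t => (1-t)*r + 3*t) (g := fun _ => (0:ℝ))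
      (k := fun _ => (0:ℝ)) (by fun_prop) continuous_const continuous_const ?_
      (by show (1-(0:ℝ))*r + 3*0 = r; ring) rfl rfl
      (by show (1-(1:ℝ))*r + 3*1 = 3; ring) rfl rfl hrq base_q
    intro t ht
    have hv : 1 < (1-t)*r + 3*t := by
      rcases le_or_gt r 3 with h3 | h3
      · nlinarith [mul_nonneg ht.1 (by linarith : (0:ℝ) ≤ 3 - r)]
      · nlinarith [mul_nonneg (by linarith [ht.2] : (0:ℝ) ≤ 1 - t) (by linarith : (0:ℝ) ≤ r - 3)]
    nlinarith [hv]
  exact s1.trans (s2.trans s3)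

lemma coords_q (a b c d : ℝ) (hdet : a*d - b*c = 1) (hδ : 2 - a - d ≠ 0) :
    ((d-a)/(2-a-d))^2 + (-(b+c)/(2-a-d))^2 - ((c-b)/(2-a-d))^2 - 1 = -4/(2-a-d) := by
  field_simp
  ring_nf
  linear_combination (-4) * hdet

/-- Every trace > 2 element of SL2 is `Psi` of its Cayley coordinates. -/
lemma Psi_eq_self (A : Matrix (Fin 2) (Fin 2) ℝ) (h : A.det = 1)
    (htr : 2 < A 0 0 + A 1 1) :
    Psi ((A 1 1 - A 0 0) / (2 - A 0 0 - A 1 1))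
        (-(A 0 1 + A 1 0) / (2 - A 0 0 - A 1 1))
        ((A 1 0 - A 0 1) / (2 - A 0 0 - A 1 1)) = A := by
  set a := A 0 0; set b := A 0 1; set c := A 1 0; set d := A 1 1
  have hdet : a * d - b * c = 1 := by rw [det_fin_two] at h; exact h
  have hδ : (2 - a - d) ≠ 0 := by intro hn; rw [show d = 2 - a by linarith] at htr; linarith
  set x := (d - a) / (2 - a - d)
  set u := -(b + c) / (2 - a - d)
  set v := (c - b) / (2 - a - d)
  have hq : x^2 + u^2 - v^2 - 1 = -4 / (2 - a - d) := coords_q a b c d hdet hδ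
  have hq0 : (-4 : ℝ) / (2 - a - d) ≠ 0 := by
    intro hn
    rcases div_eq_zero_iff.mp hn with h1 | h2
    · norm_num at h1
    · exact hδ h2
  ext i j
  fin_cases i <;> fin_cases j <;>
    simp only [Psi, Matrix.smul_apply, Matrix.cons_val', Matrix.cons_val_zero,
      Matrix.cons_val_one, Matrix.head_cons, Matrix.head_fin_const, Matrix.of_apply,
      Matrix.empty_val', Matrix.cons_val_fin_one, smul_eq_mul, hq, Fin.zero_eta, Fin.mk_one] <;>
    simp only [x, u, v] <;> field_simp <;> ring_nf <;> nlinarith [hdet, sq_nonneg (a+d)]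

lemma trace_lt_of_mem_minus (A : SL2R) (hA : A ∈ Sminus) :
    A.val 0 0 + A.val 1 1 < 2 := by
  have := det_sub_one A.val A.2
  have h : (A.val - 1).det > 0 := hA
  linarith [this ▸ h]

lemma trace_gt_of_mem_plus (A : SL2R) (hA : A ∈ Splus) :
    2 < A.val 0 0 + A.val 1 1 := by
  have := det_sub_one A.val A.2
  have h : (A.val - 1).det < 0 := hA
  linarith [this ▸ h]

/-- key: every element of Splus equals PsiS of its coordinates. -/
lemma mem_plus_eq_psiS (A : SL2R) (hA : A ∈ Splus) :
    ∃ (x u v : ℝ) (h : 1 < x^2 + u^2 - v^2), A = PsiS x u v h := by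
  have htr := trace_gt_of_mem_plus A hA
  have hδ : (2 - A.val 0 0 - A.val 1 1) ≠ 0 := by intro hn; nlinarith
  have hδneg : (2 - A.val 0 0 - A.val 1 1) < 0 := by nlinarith
  have hdet : A.val 0 0 * A.val 1 1 - A.val 0 1 * A.val 1 0 = 1 := by
    have := A.2; rw [det_fin_two] at this; exact this
  have hq := coords_q (A.val 0 0) (A.val 0 1) (A.val 1 0) (A.val 1 1) hdet hδ
  have hqpos : (0:ℝ) < -4 / (2 - A.val 0 0 - A.val 1 1) :=
    div_pos_of_neg_of_neg (by norm_num) hδneg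
  refine ⟨(A.val 1 1 - A.val 0 0) / (2 - A.val 0 0 - A.val 1 1),
    -(A.val 0 1 + A.val 1 0) / (2 - A.val 0 0 - A.val 1 1),
    (A.val 1 0 - A.val 0 1) / (2 - A.val 0 0 - A.val 1 1),
    by linarith [hq, hqpos], ?_⟩
  exact Subtype.ext (Psi_eq_self A.val A.2 htr).symm

lemma isPathConnected_plus : IsPathConnected Splus := by
  refine ⟨PsiS 3 0 0 base_q, PsiS_mem base_q, ?_⟩
  intro A hA
  obtain ⟨x, u, v, h, rfl⟩ := mem_plus_eq_psiS A hA
  exact (joined_to_base x u v h).symm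

/-- The normalized mix with -1, as an element of SL2R. -/
def nmixm (A : SL2R) (htr : A.val 0 0 + A.val 1 1 < 2) (t : unitInterval) : SL2R :=
  ⟨nrm (mix t A.val (-1)), nrm_det (mix_det_negone_pos t.2 A.val A.2 htr)⟩

lemma negone_det : ((-1 : Matrix (Fin 2) (Fin 2) ℝ)).det = 1 := by
  rw [det_fin_two]
  simp [Matrix.one_apply]

def negoneS : SL2R := ⟨-1, negone_det⟩

lemma negoneS_mem : negoneS ∈ Sminus := by
  show (0:ℝ) < ((-1 : Matrix (Fin 2) (Fin 2) ℝ) - 1).det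
  rw [det_fin_two]
  simp [Matrix.sub_apply, Matrix.one_apply, Matrix.neg_apply]
  norm_num

lemma nmixm_mem (A : SL2R) (htr : A.val 0 0 + A.val 1 1 < 2) (t : unitInterval) :
    nmixm A htr t ∈ Sminus := by
  show (0:ℝ) < ((nmixm A htr t).val - 1).det
  have hd : 0 < (mix t A.val (-1)).det := mix_det_negone_pos t.2 A.val A.2 htr
  have h1 : (nmixm A htr t).val.det = 1 := nrm_det hd
  rw [det_sub_one _ h1]
  have hs : 0 < Real.sqrt (mix t A.val (-1)).det := Real.sqrt_pos.2 hd
  have htr2 := mix_trace_negone t.2 A.val A.2 htr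
  have hval : (nmixm A htr t).val 0 0 + (nmixm A htr t).val 1 1
      = (Real.sqrt (mix t A.val (-1)).det)⁻¹ *
        ((mix t A.val (-1)) 0 0 + (mix t A.val (-1)) 1 1) := by
    simp [nmixm, nrm, Matrix.smul_apply]
    ring
  rw [hval]
  have h2 : (Real.sqrt (mix t A.val (-1)).det)⁻¹ * (2 * Real.sqrt (mix t A.val (-1)).det) = 2 := by
    field_simp
  linarith [mul_lt_mul_of_pos_left htr2 (inv_pos.2 hs), h2]

lemma nmixm_cont (A : SL2R) (htr : A.val 0 0 + A.val 1 1 < 2) :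
    Continuous (nmixm A htr) := by
  apply Continuous.subtype_mk
  have hM : Continuous fun t : unitInterval => mix t A.val (-1) := by
    unfold mix
    fun_prop
  have hd : Continuous fun t : unitInterval => (mix t A.val (-1)).det := hM.matrix_det
  have hs : Continuous fun t : unitInterval => (Real.sqrt (mix t A.val (-1)).det)⁻¹ := by
    apply Continuous.inv₀ (Real.continuous_sqrt.comp hd)
    intro t
    exact (Real.sqrt_pos.2 (mix_det_negone_pos t.2 A.val A.2 htr)).ne'
  exact hs.smul hM

lemma joined_minus (A : SL2R) (hA : A ∈ Sminus) : JoinedIn Sminus A negoneS := by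
  have htr := trace_lt_of_mem_minus A hA
  refine ⟨{ toFun := nmixm A htr,
            continuous_toFun := nmixm_cont A htr,
            source' := ?_, target' := ?_ }, fun t => nmixm_mem A htr t⟩
  · apply Subtype.ext
    show nrm (mix ((0:unitInterval) : ℝ) A.val (-1)) = A.val
    rw [show ((0:unitInterval):ℝ) = 0 from rfl, mix_zero, nrm_one A.2]
  · apply Subtype.ext
    show nrm (mix ((1:unitInterval) : ℝ) A.val (-1)) = (-1 : Matrix (Fin 2) (Fin 2) ℝ)
    rw [show ((1:unitInterval):ℝ) = 1 from rfl, mix_one, nrm_one negone_det]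

lemma isPathConnected_minus : IsPathConnected Sminus := by
  refine ⟨negoneS, negoneS_mem, ?_⟩
  intro A hA
  exact (joined_minus A hA).symm

/-- Homotopy of a loop to a constant, by normalized mixing with E. -/
def oneS : SL2R := ⟨1, det_one⟩

lemma homotopy_mix (γ : C(Circle, SL2R)) (E : Matrix (Fin 2) (Fin 2) ℝ) (hE : E.det = 1)
    (hpos : ∀ (t : unitInterval) (z : Circle), 0 < (mix t (γ z).val E).det) :
    ContinuousMap.Homotopic γ (ContinuousMap.const Circle (⟨E, hE⟩ : SL2R)) := by
  refine ⟨{ toFun := fun p => ⟨nrm (mix p.1 (γ p.2).val E), nrm_det (hpos p.1 p.2)⟩,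
            continuous_toFun := ?_, map_zero_left := ?_, map_one_left := ?_ }⟩
  · apply Continuous.subtype_mk
    have hγ : Continuous fun p : unitInterval × Circle => (γ p.2).val :=
      continuous_subtype_val.comp (γ.continuous.comp continuous_snd)
    have hM : Continuous fun p : unitInterval × Circle => mix p.1 (γ p.2).val E := by
      unfold mix
      apply Continuous.add
      · exact (continuous_const.sub (continuous_subtype_val.comp continuous_fst)).smul hγ
      · exact (continuous_subtype_val.comp continuous_fst).smul continuous_const
    have hd := hM.matrix_det
    have hs : Continuous fun p : unitInterval × Circle =>
        (Real.sqrt (mix p.1 (γ p.2).val E).det)⁻¹ := by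
      apply Continuous.inv₀ (Real.continuous_sqrt.comp hd)
      intro p
      exact (Real.sqrt_pos.2 (hpos p.1 p.2)).ne'
    exact hs.smul hM
  · intro z
    apply Subtype.ext
    show nrm (mix ((0:unitInterval) : ℝ) (γ z).val E) = (γ z).val
    rw [show ((0:unitInterval):ℝ) = 0 from rfl, mix_zero, nrm_one (γ z).2]
  · intro z
    apply Subtype.ext
    show nrm (mix ((1:unitInterval) : ℝ) (γ z).val E) = E
    rw [show ((1:unitInterval):ℝ) = 1 from rfl, mix_one, nrm_one hE]

end SP2Aux

end

open SP2Aux in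
/-- `Sp(2)⁺ = {A : det(A−I) < 0}` and `Sp(2)⁻ = {A : det(A−I) > 0}` are each
path connected, and every loop contained in one of them is freely
null-homotopic in `SL(2,ℝ)`. -/
theorem sp2_plus_minus_connected_simplyConnected :
    IsPathConnected {A : SL2R | (A.val - 1).det < 0} ∧
    IsPathConnected {A : SL2R | (A.val - 1).det > 0} ∧
    (∀ γ : C(Circle, SL2R), (∀ z, ((γ z).val - 1).det < 0) →
      ∃ A : SL2R, ContinuousMap.Homotopic γ (ContinuousMap.const Circle A)) ∧
    (∀ γ : C(Circle, SL2R), (∀ z, ((γ z).val - 1).det > 0) →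
      ∃ A : SL2R, ContinuousMap.Homotopic γ (ContinuousMap.const Circle A)) := by
  refine ⟨isPathConnected_plus, isPathConnected_minus, ?_, ?_⟩
  · intro γ hγ
    refine ⟨⟨1, det_one⟩, ?_⟩
    apply homotopy_mix γ 1 det_one
    intro t z
    exact mix_det_one_pos t.2 (γ z).val (γ z).2 (trace_gt_of_mem_plus (γ z) (hγ z))
  · intro γ hγ
    refine ⟨⟨-1, negone_det⟩, ?_⟩
    apply homotopy_mix γ (-1) negone_det
    intro t z
    exact mix_det_negone_pos t.2 (γ z).val (γ z).2 (trace_lt_of_mem_minus (γ z) (hγ z))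
end

section
/- Fix ω ∈ ℂ with |ω| = 1, and for A ∈ SL(2,ℝ) set D_A(ω) = ω̄ · det(A − ωI), which is real. Then each of the open sets Sp(2)_ω⁺ = {A ∈ SL(2,ℝ) : D_A(ω) < 0} and Sp(2)_ω⁻ = {A ∈ SL(2,ℝ) : D_A(ω) > 0} is path connected, and every continuous loop contained in Sp(2)_ω⁺ (respectively Sp(2)_ω⁻) is null-homotopic in SL(2,ℝ). -/
open Matrix Complex

/-- `D_A(ω) = ω̄ · det(A − ωI)`, a real number for `A ∈ SL(2,ℝ)` and `|ω|=1`. -/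
noncomputable def Dom (A : SL2R) (ω : ℂ) : ℝ :=
  ((starRingEnd ℂ) ω * ((A.val.map (Complex.ofReal)) - ω • 1).det).re

namespace SP2

def X (M : Matrix (Fin 2) (Fin 2) ℝ) : ℝ := M 0 0 + M 1 1
def Y (M : Matrix (Fin 2) (Fin 2) ℝ) : ℝ := M 1 0 - M 0 1

lemma det_one (A : SL2R) : A.val 0 0 * A.val 1 1 - A.val 0 1 * A.val 1 0 = 1 := by
  rw [← Matrix.det_fin_two]; exact A.property

lemma Dom_eq (A : SL2R) (ω : ℂ) (hω : ‖ω‖ = 1) :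
    Dom A ω = 2 * ω.re - X A.val := by
  have hn : ω.re ^ 2 + ω.im ^ 2 = 1 := by
    have h2 := Complex.sq_norm ω
    rw [hω] at h2
    simpa [Complex.normSq_apply, sq] using h2.symm
  have hd := det_one A
  unfold Dom X
  rw [show (A.val.map (Complex.ofReal)) - ω • 1 =
    !![(A.val 0 0 : ℂ) - ω, (A.val 0 1 : ℂ); (A.val 1 0 : ℂ), (A.val 1 1 : ℂ) - ω] from ?_]
  · rw [Matrix.det_fin_two_of]
    simp only [Complex.mul_re, Complex.mul_im, Complex.sub_re, Complex.sub_im,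
      Complex.ofReal_re, Complex.ofReal_im, Complex.conj_re, Complex.conj_im]
    linear_combination ω.re * hd + (ω.re - A.val 0 0 - A.val 1 1) * hn
  · ext i j
    fin_cases i <;> fin_cases j <;>
      simp [Matrix.map_apply, Matrix.sub_apply, Matrix.smul_apply, Matrix.one_apply]

def mr (u v : ℝ) : Matrix (Fin 2) (Fin 2) ℝ := !![u, -v; v, u]

lemma det_mr (u v : ℝ) : (mr u v).det = u ^ 2 + v ^ 2 := by
  simp [mr, Matrix.det_fin_two_of]; ring

noncomputable def nsl (M : Matrix (Fin 2) (Fin 2) ℝ) : Matrix (Fin 2) (Fin 2) ℝ :=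
  (Real.sqrt M.det)⁻¹ • M

lemma det_nsl {M : Matrix (Fin 2) (Fin 2) ℝ} (h : 0 < M.det) : (nsl M).det = 1 := by
  unfold nsl
  rw [Matrix.det_smul]
  have hs : Real.sqrt M.det > 0 := Real.sqrt_pos.2 h
  have h2 : Real.sqrt M.det ^ 2 = M.det := Real.sq_sqrt h.le
  rw [Fintype.card_fin, inv_pow, h2, inv_mul_cancel₀ (ne_of_gt h)]

lemma nsl_of_det_one {M : Matrix (Fin 2) (Fin 2) ℝ} (h : M.det = 1) : nsl M = M := by
  unfold nsl; rw [h]; simp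

-- entries continuity
lemma cont_entry (i j : Fin 2) : Continuous fun A : SL2R => A.val i j :=
  (continuous_apply j).comp ((continuous_apply i).comp continuous_subtype_val)

-- the rotation part of A
noncomputable def rotp (A : SL2R) : Matrix (Fin 2) (Fin 2) ℝ := nsl (mr (X A.val) (Y A.val))

lemma r2_ge (A : SL2R) : 4 ≤ X A.val ^ 2 + Y A.val ^ 2 := by
  have h := det_one A
  have key : X A.val ^ 2 + Y A.val ^ 2 - 4 =
      (A.val 0 0 - A.val 1 1) ^ 2 + (A.val 0 1 + A.val 1 0) ^ 2 := by
    unfold X Y; linear_combination 4 * h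
  nlinarith [sq_nonneg (A.val 0 0 - A.val 1 1), sq_nonneg (A.val 0 1 + A.val 1 0)]

lemma r2_pos (A : SL2R) : 0 < X A.val ^ 2 + Y A.val ^ 2 := lt_of_lt_of_le (by norm_num) (r2_ge A)

lemma det_rotp (A : SL2R) : (rotp A).det = 1 :=
  det_nsl (by rw [det_mr]; exact r2_pos A)

noncomputable def rr (A : SL2R) : ℝ := Real.sqrt (X A.val ^ 2 + Y A.val ^ 2)

lemma rr_sq (A : SL2R) : rr A ^ 2 = X A.val ^ 2 + Y A.val ^ 2 :=
  Real.sq_sqrt (r2_pos A).le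

lemma rr_ge (A : SL2R) : 2 ≤ rr A := by
  have h := r2_ge A
  have h2 := rr_sq A
  have h0 : 0 ≤ rr A := Real.sqrt_nonneg _
  nlinarith

lemma rr_pos (A : SL2R) : 0 < rr A := lt_of_lt_of_le (by norm_num) (rr_ge A)

lemma rotp_eq (A : SL2R) : rotp A = (rr A)⁻¹ • mr (X A.val) (Y A.val) := by
  unfold rotp nsl rr; rw [det_mr]

noncomputable def N (A : SL2R) (t : ℝ) : Matrix (Fin 2) (Fin 2) ℝ :=
  (1 - t) • A.val + t • rotp A

lemma det_N (A : SL2R) (t : ℝ) :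
    (N A t).det = (1 - t) ^ 2 + t ^ 2 + t * (1 - t) * rr A := by
  have hd := det_one A
  have hr2 := rr_sq A
  have hrne : rr A ≠ 0 := (rr_pos A).ne'
  have hN : N A t = (rr A)⁻¹ •
      ((1 - t) • (rr A • A.val) + t • mr (X A.val) (Y A.val)) := by
    rw [N, rotp_eq]
    ext i j
    simp only [Matrix.add_apply, Matrix.smul_apply, smul_eq_mul]
    field_simp
  rw [hN, Matrix.det_smul, Fintype.card_fin]
  have hM : ((1 - t) • (rr A • A.val) + t • mr (X A.val) (Y A.val)).det =
      rr A ^ 2 * ((1 - t) ^ 2 + t ^ 2 + t * (1 - t) * rr A) := by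
    rw [Matrix.det_fin_two]
    simp only [Matrix.add_apply, Matrix.smul_apply, smul_eq_mul, mr,
      Matrix.cons_val', Matrix.cons_val_zero, Matrix.cons_val_one,
      Matrix.head_cons, Matrix.head_fin_const, Matrix.empty_val',
      Matrix.cons_val_fin_one, Matrix.of_apply]
    unfold X Y at hr2 ⊢
    linear_combination ((1 - t) ^ 2 * rr A ^ 2) * hd +
      (t ^ 2 + t * (1 - t) * rr A) * hr2.symm
  rw [hM]
  field_simp

lemma det_N_ge (A : SL2R) (t : ℝ) (h0 : 0 ≤ t) (h1 : t ≤ 1) : 1 ≤ (N A t).det := by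
  rw [det_N]
  have := rr_ge A
  nlinarith [mul_nonneg (mul_nonneg h0 (by linarith : (0:ℝ) ≤ 1 - t)) (by linarith : (0:ℝ) ≤ rr A - 2)]

lemma N_zero (A : SL2R) : N A 0 = A.val := by simp [N]

lemma N_one (A : SL2R) : N A 1 = rotp A := by simp [N]

lemma mr_one : mr 1 0 = (1 : Matrix (Fin 2) (Fin 2) ℝ) := by
  ext i j; fin_cases i <;> fin_cases j <;> simp [mr, Matrix.one_apply]

lemma x_le_rr (A : SL2R) : X A.val ≤ rr A := by
  have h2 := rr_sq A
  have h0 : 0 ≤ rr A := Real.sqrt_nonneg _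
  nlinarith [sq_nonneg (Y A.val)]

lemma slit (c : ℝ) (hc : -2 ≤ c) (A : SL2R) (hA : c < X A.val) (hy : Y A.val = 0) :
    0 < X A.val := by
  have h := r2_ge A
  rw [hy] at h
  nlinarith

/-- `AᵀA + 1` -/
noncomputable def W (A : SL2R) : Matrix (Fin 2) (Fin 2) ℝ := A.valᵀ * A.val + 1

lemma W_entries : W A = !![A.val 0 0 ^ 2 + A.val 1 0 ^ 2 + 1,
    A.val 0 0 * A.val 0 1 + A.val 1 0 * A.val 1 1;
    A.val 0 0 * A.val 0 1 + A.val 1 0 * A.val 1 1,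
    A.val 0 1 ^ 2 + A.val 1 1 ^ 2 + 1] := by
  ext i j
  fin_cases i <;> fin_cases j <;>
    simp [W, Matrix.mul_apply, Matrix.one_apply, Fin.sum_univ_two,
      Matrix.transpose_apply, Matrix.add_apply] <;> ring

lemma det_W (A : SL2R) : (W A).det = rr A ^ 2 := by
  have hd := det_one A
  have hr2 := rr_sq A
  rw [W_entries, Matrix.det_fin_two_of]
  unfold X Y at hr2
  linear_combination hr2.symm +
    (A.val 0 0 * A.val 1 1 - A.val 0 1 * A.val 1 0 - 1) * hd

lemma trace_W (A : SL2R) :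
    (W A 0 0 + W A 1 1) = rr A ^ 2 := by
  have hd := det_one A
  have hr2 := rr_sq A
  rw [W_entries]
  unfold X Y at hr2
  simp only [Matrix.cons_val', Matrix.cons_val_zero, Matrix.cons_val_one,
    Matrix.head_cons, Matrix.empty_val', Matrix.cons_val_fin_one, Matrix.of_apply,
    Matrix.head_fin_const]
  linear_combination hr2.symm + (-2) * hd

/-- the key polar identity `mr x y * (AᵀA + 1) = (x²+y²) • A`. -/
lemma polar_identity (A : SL2R) :
    mr (X A.val) (Y A.val) * W A = (X A.val ^ 2 + Y A.val ^ 2) • A.val := by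
  have hd := det_one A
  rw [W_entries]
  ext i j
  fin_cases i <;> fin_cases j <;>
    · simp [mr, Matrix.mul_apply, Fin.sum_univ_two, Matrix.smul_apply,
        smul_eq_mul]
      unfold X Y
      first
      | linear_combination (-(A.val 0 0 + A.val 1 1)) * hd
      | linear_combination (A.val 1 0 - A.val 0 1) * hd
      | linear_combination (A.val 0 1 - A.val 1 0) * hd

noncomputable def uu (A : SL2R) (t : ℝ) : ℝ := (1 - t) * X A.val + t * rr A
noncomputable def vv (A : SL2R) (t : ℝ) : ℝ := (1 - t) * Y A.val
noncomputable def rho (A : SL2R) (t : ℝ) : ℝ := Real.sqrt (uu A t ^ 2 + vv A t ^ 2)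

lemma sq_lemma {a b : ℝ} (ha : 0 ≤ a) (hb : 0 ≤ b) (h : a ^ 2 ≤ b ^ 2) : a ≤ b := by
  rw [← Real.sqrt_sq ha, ← Real.sqrt_sq hb]
  exact Real.sqrt_le_sqrt h

lemma uv_pos {c : ℝ} (hc : -2 ≤ c) (A : SL2R) (hA : c < X A.val) {t : ℝ}
    (h0 : 0 ≤ t) (h1 : t ≤ 1) : 0 < uu A t ^ 2 + vv A t ^ 2 := by
  by_cases hy : Y A.val = 0
  · have hx := slit c hc A hA hy
    have hu : 0 < uu A t := by
      rcases eq_or_lt_of_le h0 with rfl | ht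
      · simpa [uu] using hx
      · have h2 : 0 < t * rr A := mul_pos ht (rr_pos A)
        have h3 : 0 ≤ (1 - t) * X A.val :=
          mul_nonneg (by linarith) hx.le
        unfold uu; linarith
    nlinarith [sq_nonneg (vv A t)]
  · rcases eq_or_lt_of_le h1 with rfl | ht
    · have hu : uu A 1 = rr A := by simp [uu]
      have hv : vv A 1 = 0 := by simp [vv]
      rw [hu, hv]
      nlinarith [rr_pos A]
    · have hv : vv A t ≠ 0 := mul_ne_zero (by linarith) hy
      have h2 : 0 < vv A t ^ 2 :=
        lt_of_le_of_ne (sq_nonneg _) (Ne.symm (pow_ne_zero 2 hv))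
      nlinarith [sq_nonneg (uu A t)]

lemma rho_pos {c : ℝ} (hc : -2 ≤ c) (A : SL2R) (hA : c < X A.val) {t : ℝ}
    (h0 : 0 ≤ t) (h1 : t ≤ 1) : 0 < rho A t :=
  Real.sqrt_pos.2 (uv_pos hc A hA h0 h1)

lemma rho_sq (A : SL2R) (t : ℝ) : rho A t ^ 2 = uu A t ^ 2 + vv A t ^ 2 :=
  Real.sq_sqrt (by positivity)

lemma rho_le_rr (A : SL2R) {t : ℝ} (h0 : 0 ≤ t) (h1 : t ≤ 1) :
    rho A t ≤ rr A := by
  have hx := x_le_rr A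
  have hr2 := rr_sq A
  have h : rho A t ^ 2 ≤ rr A ^ 2 := by
    rw [rho_sq]
    have hid : rr A ^ 2 - (uu A t ^ 2 + vv A t ^ 2) =
        2*t*(1-t)*(rr A)*(rr A - X A.val) +
        (1-t)^2*(rr A ^ 2 - X A.val ^ 2 - Y A.val ^ 2) := by
      unfold uu vv; ring
    nlinarith [hid, mul_nonneg (mul_nonneg (mul_nonneg h0 (by linarith : (0:ℝ) ≤ 1 - t))
      (rr_pos A).le) (by linarith : (0:ℝ) ≤ rr A - X A.val)]
  exact sq_lemma (Real.sqrt_nonneg _) (rr_pos A).le h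

lemma key_claim (A : SL2R) {t : ℝ} (h0 : 0 ≤ t) (h1 : t ≤ 1) :
    X A.val * rho A t ≤ uu A t * rr A := by
  have hx := x_le_rr A
  have hρr := rho_le_rr A h0 h1
  have hρ0 : 0 ≤ rho A t := Real.sqrt_nonneg _
  have hr0 : 0 < rr A := rr_pos A
  have hux : X A.val ≤ uu A t := by
    unfold uu; nlinarith
  rcases le_or_gt 0 (X A.val) with hxp | hxn
  · calc X A.val * rho A t ≤ X A.val * rr A := by nlinarith
    _ ≤ uu A t * rr A := by nlinarith
  · rcases le_or_gt 0 (uu A t) with hup | hun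
    · nlinarith
    · -- both negative
      have ht1 : t < 1 := by
        by_contra h
        have : t = 1 := le_antisymm h1 (not_lt.1 h)
        rw [this] at hun
        have : uu A 1 = rr A := by simp [uu]
        rw [this] at hun; linarith
      have hub : -uu A t ≤ (1 - t) * (-X A.val) := by
        unfold uu
        nlinarith [mul_nonneg h0 hr0.le]
      have hsq : (-(uu A t) * rr A) ^ 2 ≤ (-(X A.val) * rho A t) ^ 2 := by
        have h2 := rho_sq A t
        have hr2 := rr_sq A
        have hu2 : uu A t ^ 2 ≤ (1 - t) ^ 2 * X A.val ^ 2 := by nlinarith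
        unfold vv at h2
        nlinarith [sq_nonneg (Y A.val), sq_nonneg (uu A t)]
      have := sq_lemma (by nlinarith) (by nlinarith) hsq
      linarith

/-- the rescaled rotated matrix along the polar path -/
noncomputable def S1m (A : SL2R) (t : ℝ) : Matrix (Fin 2) (Fin 2) ℝ :=
  ((rho A t * rr A)⁻¹) • (mr (uu A t) (vv A t) * W A)

lemma det_S1m (A : SL2R) {t : ℝ} (hp : 0 < uu A t ^ 2 + vv A t ^ 2) :
    (S1m A t).det = 1 := by
  have hρ : 0 < rho A t := Real.sqrt_pos.2 hp
  have hρ2 := rho_sq A t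
  rw [S1m, Matrix.det_smul, Matrix.det_mul, det_mr, det_W, Fintype.card_fin, ← hρ2]
  have hpos : 0 < rho A t ^ 2 * rr A ^ 2 :=
    mul_pos (pow_pos hρ 2) (pow_pos (rr_pos A) 2)
  field_simp [mul_pow]
  exact div_self (rr_pos A).ne'

lemma X_smul (k : ℝ) (M : Matrix (Fin 2) (Fin 2) ℝ) : X (k • M) = k * X M := by
  simp [X, Matrix.smul_apply]; ring

lemma X_mrW (A : SL2R) (u v : ℝ) : X (mr u v * W A) = u * rr A ^ 2 := by
  have hd := det_one A
  have hr2 := rr_sq A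
  rw [W_entries]
  unfold X Y at hr2
  unfold X
  simp [mr, Matrix.mul_apply, Fin.sum_univ_two]
  linear_combination (-u) * hr2 + (-2 * u) * hd

lemma X_S1m (A : SL2R) (t : ℝ) :
    X (S1m A t) = uu A t * rr A ^ 2 * (rho A t * rr A)⁻¹ := by
  rw [S1m, X_smul, X_mrW]; ring

lemma X_S1m_gt {c : ℝ} (hc : -2 ≤ c) (A : SL2R) (hA : c < X A.val) {t : ℝ}
    (h0 : 0 ≤ t) (h1 : t ≤ 1) : c < X (S1m A t) := by
  have hρ := rho_pos hc A hA h0 h1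
  have hr := rr_pos A
  have hkey := key_claim A h0 h1
  rw [X_S1m]
  have h4 : uu A t * rr A ^ 2 * (rho A t * rr A)⁻¹ = (uu A t * rr A) / rho A t := by
    field_simp
  rw [h4, lt_div_iff₀ hρ]
  nlinarith [mul_lt_mul_of_pos_right hA hρ]

lemma S1m_zero (A : SL2R) : S1m A 0 = A.val := by
  have hr2 := rr_sq A
  have hrne : rr A ≠ 0 := (rr_pos A).ne'
  have h0 : rho A 0 = rr A := by simp [rho, uu, vv, rr]
  have hu : uu A 0 = X A.val := by simp [uu]
  have hv : vv A 0 = Y A.val := by simp [vv]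
  rw [S1m, h0, hu, hv, polar_identity, smul_smul]
  have : (rr A * rr A)⁻¹ * (X A.val ^ 2 + Y A.val ^ 2) = 1 := by
    rw [← hr2]; field_simp
  rw [this, one_smul]

/-- symmetric positive matrices of determinant one -/
noncomputable def ps (p q : ℝ) : Matrix (Fin 2) (Fin 2) ℝ :=
  !![p, q; q, (1 + q ^ 2) / p]

lemma det_ps {p : ℝ} (hp : p ≠ 0) (q : ℝ) : (ps p q).det = 1 := by
  rw [ps, Matrix.det_fin_two_of]
  field_simp; ring

lemma X_ps (p q : ℝ) : X (ps p q) = p + (1 + q ^ 2) / p := by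
  simp [ps, X]

noncomputable def psSL (p q : ℝ) (hp : 0 < p) : SL2R := ⟨ps p q, det_ps hp.ne' q⟩

noncomputable def pp (A : SL2R) : ℝ := (A.val 0 0 ^ 2 + A.val 1 0 ^ 2 + 1) / rr A
noncomputable def qq (A : SL2R) : ℝ := (A.val 0 0 * A.val 0 1 + A.val 1 0 * A.val 1 1) / rr A

lemma pp_pos (A : SL2R) : 0 < pp A := div_pos (by positivity) (rr_pos A)

lemma mr_diag (u : ℝ) : mr u 0 = u • (1 : Matrix (Fin 2) (Fin 2) ℝ) := by
  ext i j; fin_cases i <;> fin_cases j <;> simp [mr, Matrix.one_apply]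

lemma S1m_one (A : SL2R) : S1m A 1 = ps (pp A) (qq A) := by
  have hr2 := rr_sq A
  have hrpos := rr_pos A
  have hrne : rr A ≠ 0 := hrpos.ne'
  have hu : uu A 1 = rr A := by simp [uu]
  have hv : vv A 1 = 0 := by simp [vv]
  have h0 : rho A 1 = rr A := by
    rw [rho, hu, hv]
    simp [Real.sqrt_sq hrpos.le]
  have hWdet : (A.val 0 0 ^ 2 + A.val 1 0 ^ 2 + 1) * (A.val 0 1 ^ 2 + A.val 1 1 ^ 2 + 1)
      - (A.val 0 0 * A.val 0 1 + A.val 1 0 * A.val 1 1)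
        * (A.val 0 0 * A.val 0 1 + A.val 1 0 * A.val 1 1) = rr A ^ 2 := by
    have h := det_W A
    rw [W_entries, Matrix.det_fin_two_of] at h
    linear_combination h
  rw [S1m, hu, hv, h0, mr_diag, Matrix.smul_mul, Matrix.one_mul, smul_smul]
  have hco : (rr A * rr A)⁻¹ * rr A = (rr A)⁻¹ := by field_simp
  rw [hco, W_entries]
  ext i j
  fin_cases i <;> fin_cases j
  · simp [ps, pp, Matrix.smul_apply, div_eq_inv_mul]
  · simp [ps, qq, Matrix.smul_apply, div_eq_inv_mul]
  · simp [ps, qq, Matrix.smul_apply, div_eq_inv_mul]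
  · show (rr A)⁻¹ * (A.val 0 1 ^ 2 + A.val 1 1 ^ 2 + 1) = (1 + qq A ^ 2) / pp A
    have hdet1 : pp A * ((rr A)⁻¹ * (A.val 0 1 ^ 2 + A.val 1 1 ^ 2 + 1)) - qq A * qq A
        = 1 := by
      have harr : (pp A * ((rr A)⁻¹ * (A.val 0 1 ^ 2 + A.val 1 1 ^ 2 + 1)) - qq A * qq A)
            * rr A ^ 2
          = (A.val 0 0 ^ 2 + A.val 1 0 ^ 2 + 1) * (A.val 0 1 ^ 2 + A.val 1 1 ^ 2 + 1)
            - (A.val 0 0 * A.val 0 1 + A.val 1 0 * A.val 1 1)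
              * (A.val 0 0 * A.val 0 1 + A.val 1 0 * A.val 1 1) := by
        unfold pp qq
        field_simp
      have h2 : (pp A * ((rr A)⁻¹ * (A.val 0 1 ^ 2 + A.val 1 1 ^ 2 + 1)) - qq A * qq A)
          * rr A ^ 2 = 1 * rr A ^ 2 := by
        rw [harr, hWdet, one_mul]
      exact mul_right_cancel₀ (pow_ne_zero 2 hrne) h2
    rw [eq_div_iff (pp_pos A).ne']
    linear_combination hdet1

lemma tr_ps_iff {c p q : ℝ} (hp : 0 < p) :
    (c < p + (1 + q ^ 2) / p) ↔ c * p < p ^ 2 + 1 + q ^ 2 := by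
  have h : p + (1 + q ^ 2) / p = (p ^ 2 + 1 + q ^ 2) / p := by field_simp; ring
  rw [h, lt_div_iff₀ hp]

lemma cont_X : Continuous fun A : SL2R => X A.val :=
  (cont_entry 0 0).add (cont_entry 1 1)

lemma cont_Y : Continuous fun A : SL2R => Y A.val :=
  (cont_entry 1 0).sub (cont_entry 0 1)

lemma cont_rr : Continuous rr :=
  Real.continuous_sqrt.comp ((cont_X.pow 2).add (cont_Y.pow 2))

lemma cont_mr {α : Type*} [TopologicalSpace α] {f g : α → ℝ}
    (hf : Continuous f) (hg : Continuous g) :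
    Continuous fun a => mr (f a) (g a) := by
  apply continuous_matrix
  intro i j
  fin_cases i <;> fin_cases j <;> simp [mr] <;> fun_prop

lemma cont_ps {α : Type*} [TopologicalSpace α] {f g : α → ℝ}
    (hf : Continuous f) (hg : Continuous g) (hne : ∀ a, f a ≠ 0) :
    Continuous fun a => ps (f a) (g a) := by
  apply continuous_matrix
  intro i j
  fin_cases i <;> fin_cases j <;> simp [ps]
  · exact hf
  · exact hg
  · exact hg
  · exact (continuous_const.add (hg.pow 2)).div hf hne

lemma joined_seg {c : ℝ} {p₀ p₁ q₀ q₁ : ℝ}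
    (hp : ∀ t : ℝ, 0 ≤ t → t ≤ 1 → 0 < (1 - t) * p₀ + t * p₁)
    (htr : ∀ t : ℝ, 0 ≤ t → t ≤ 1 →
      c * ((1 - t) * p₀ + t * p₁) <
        ((1 - t) * p₀ + t * p₁) ^ 2 + 1 + ((1 - t) * q₀ + t * q₁) ^ 2) :
    JoinedIn {A : SL2R | c < X A.val}
      (psSL p₀ q₀ (by simpa using hp 0 le_rfl zero_le_one))
      (psSL p₁ q₁ (by simpa using hp 1 zero_le_one le_rfl)) := by
  refine ⟨⟨⟨fun t => ⟨ps ((1 - (t:ℝ)) * p₀ + t * p₁) ((1 - (t:ℝ)) * q₀ + t * q₁),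
      det_ps (hp t t.2.1 t.2.2).ne' _⟩, ?_⟩, ?_, ?_⟩, ?_⟩
  · apply Continuous.subtype_mk
    apply cont_ps
    · fun_prop
    · fun_prop
    · exact fun t => (hp t t.2.1 t.2.2).ne'
  · apply Subtype.ext
    simp [psSL]
  · apply Subtype.ext
    simp [psSL]
  · intro t
    show c < X (ps ((1 - (t:ℝ)) * p₀ + t * p₁) ((1 - (t:ℝ)) * q₀ + t * q₁))
    rw [X_ps, tr_ps_iff (hp t t.2.1 t.2.2)]
    exact htr t t.2.1 t.2.2

lemma joined_S1 {c : ℝ} (hc : -2 ≤ c) (A : SL2R) (hA : c < X A.val) :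
    JoinedIn {B : SL2R | c < X B.val} A (psSL (pp A) (qq A) (pp_pos A)) := by
  refine ⟨⟨⟨fun t => ⟨S1m A t, det_S1m A (uv_pos hc A hA t.2.1 t.2.2)⟩, ?_⟩, ?_, ?_⟩, ?_⟩
  · apply Continuous.subtype_mk
    have hcu : Continuous fun t : unitInterval => uu A t := by
      unfold uu; fun_prop
    have hcv : Continuous fun t : unitInterval => vv A t := by
      unfold vv; fun_prop
    have hcr : Continuous fun t : unitInterval => rho A t := by
      unfold rho
      exact Real.continuous_sqrt.comp (by fun_prop)
    refine Continuous.smul (f := fun t : unitInterval => (rho A t * rr A)⁻¹) (g := fun t : unitInterval => mr (uu A t) (vv A t) * W A) ?_ ?_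
    · apply Continuous.inv₀
      · exact hcr.mul continuous_const
      · exact fun t => (mul_pos (rho_pos hc A hA t.2.1 t.2.2) (rr_pos A)).ne'
    · exact (cont_mr hcu hcv).matrix_mul continuous_const
  · apply Subtype.ext
    show S1m A ((0 : unitInterval) : ℝ) = A.val
    rw [show ((0 : unitInterval) : ℝ) = 0 by simp, S1m_zero]
  · apply Subtype.ext
    show S1m A ((1 : unitInterval) : ℝ) = (psSL (pp A) (qq A) (pp_pos A)).val
    rw [show ((1 : unitInterval) : ℝ) = 1 by simp, S1m_one]
    rfl
  · intro t
    exact X_S1m_gt hc A hA t.2.1 t.2.2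

lemma sq_pos_of_ne {q : ℝ} (hq : q ≠ 0) : 0 < q ^ 2 :=
  lt_of_le_of_ne (sq_nonneg q) (Ne.symm (pow_ne_zero 2 hq))

lemma key_pc (c : ℝ) (hc2 : -2 ≤ c) (hc : c ≤ 2) :
    IsPathConnected {A : SL2R | c < X A.val} := by
  refine ⟨psSL 3 0 (by norm_num), ?_, ?_⟩
  · show c < X (ps 3 0)
    rw [X_ps]
    norm_num
    linarith
  · intro A hA
    have h1 := joined_S1 hc2 A hA
    have hppos := pp_pos A
    have hs : c < X (psSL (pp A) (qq A) (pp_pos A)).val := h1.target_mem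
    have hsx : c * pp A < pp A ^ 2 + 1 + qq A ^ 2 := by
      rw [show (psSL (pp A) (qq A) (pp_pos A)).val = ps (pp A) (qq A) from rfl, X_ps,
        tr_ps_iff hppos] at hs
      exact hs
    by_cases hq : qq A = 0
    · rw [hq] at h1 hsx
      have segA : JoinedIn {B : SL2R | c < X B.val}
          (psSL (pp A) 0 hppos)
          (psSL (pp A) 1 hppos) := by
        apply joined_seg
        · intro t h0 h1t
          have : (1 - t) * pp A + t * pp A = pp A := by ring
          rw [this]; exact hppos
        · intro t h0 h1t
          have h2 : (1 - t) * pp A + t * pp A = pp A := by ring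
          rw [h2]
          nlinarith [sq_nonneg ((1-t)*0 + t*1)]
      have segB : JoinedIn {B : SL2R | c < X B.val}
          (psSL (pp A) 1 hppos)
          (psSL 3 1 (by norm_num)) := by
        apply joined_seg
        · intro t h0 h1t
          nlinarith
        · intro t h0 h1t
          have hptpos : 0 < (1 - t) * pp A + t * 3 := by nlinarith
          nlinarith [sq_nonneg ((1 - t) * pp A + t * 3 - 1), sq_nonneg ((1-t)*1 + t*1),
            mul_nonneg (by linarith : (0:ℝ) ≤ 2 - c) hptpos.le]
      have segC : JoinedIn {B : SL2R | c < X B.val}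
          (psSL 3 1 (by norm_num)) (psSL 3 0 (by norm_num)) := by
        apply joined_seg
        · intro t h0 h1t
          nlinarith
        · intro t h0 h1t
          have h3 : (1 - t) * (3:ℝ) + t * 3 = 3 := by ring
          rw [h3]
          nlinarith [sq_nonneg ((1-t)*1 + t*0)]
      exact (((h1.trans segA).trans segB).trans segC).symm
    · have hq2 : 0 < qq A ^ 2 := sq_pos_of_ne hq
      have segA : JoinedIn {B : SL2R | c < X B.val}
          (psSL (pp A) (qq A) hppos) (psSL 3 (qq A) (by norm_num)) := by
        apply joined_seg
        · intro t h0 h1t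
          nlinarith
        · intro t h0 h1t
          have hptpos : 0 < (1 - t) * pp A + t * 3 := by nlinarith
          have hqt : (1 - t) * qq A + t * qq A = qq A := by ring
          rw [hqt]
          nlinarith [sq_nonneg ((1 - t) * pp A + t * 3 - 1),
            mul_nonneg (by linarith : (0:ℝ) ≤ 2 - c) hptpos.le]
      have segB : JoinedIn {B : SL2R | c < X B.val}
          (psSL 3 (qq A) (by norm_num)) (psSL 3 0 (by norm_num)) := by
        apply joined_seg
        · intro t h0 h1t
          nlinarith
        · intro t h0 h1t
          have h3 : (1 - t) * (3:ℝ) + t * 3 = 3 := by ring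
          rw [h3]
          nlinarith [sq_nonneg ((1-t) * qq A + t * 0)]
      exact ((h1.trans segA).trans segB).symm

noncomputable def rotSL (A : SL2R) : SL2R := ⟨rotp A, det_rotp A⟩

lemma cont_rotp : Continuous fun A : SL2R => rotp A := by
  have h : (fun A : SL2R => rotp A) = fun A => (rr A)⁻¹ • mr (X A.val) (Y A.val) :=
    funext rotp_eq
  rw [h]
  exact (cont_rr.inv₀ fun A => (rr_pos A).ne').smul (cont_mr cont_X cont_Y)

lemma cont_nsl {α : Type*} [TopologicalSpace α] {f : α → Matrix (Fin 2) (Fin 2) ℝ}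
    (hf : Continuous f) (hd : ∀ a, 0 < (f a).det) : Continuous fun a => nsl (f a) :=
  ((Real.continuous_sqrt.comp hf.matrix_det).inv₀
    (fun a => (Real.sqrt_pos.2 (hd a)).ne')).smul hf

def SL1 : SL2R := ⟨1, Matrix.det_one⟩

lemma uv2_pos {c : ℝ} (hc : -2 ≤ c) (A : SL2R) (hA : c < X A.val) {t : ℝ}
    (h0 : 0 ≤ t) (h1 : t ≤ 1) :
    0 < ((1 - t) * X A.val + t) ^ 2 + ((1 - t) * Y A.val) ^ 2 := by
  by_cases hy : Y A.val = 0
  · have hx := slit c hc A hA hy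
    have hu : 0 < (1 - t) * X A.val + t := by
      rcases eq_or_lt_of_le h0 with rfl | ht
      · simpa using hx
      · have h3 : 0 ≤ (1 - t) * X A.val := mul_nonneg (by linarith) hx.le
        linarith
    nlinarith [sq_nonneg ((1 - t) * Y A.val)]
  · rcases eq_or_lt_of_le h1 with rfl | ht
    · norm_num
    · have hv : (1 - t) * Y A.val ≠ 0 := mul_ne_zero (by linarith) hy
      have h2 : 0 < ((1 - t) * Y A.val) ^ 2 := sq_pos_of_ne hv
      nlinarith [sq_nonneg ((1 - t) * X A.val + t)]

lemma key_null (c : ℝ) (hc : -2 ≤ c) (γ : C(Circle, SL2R))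
    (hγ : ∀ z, c < X (γ z).val) :
    ContinuousMap.Homotopic γ (ContinuousMap.const Circle SL1) := by
  have hdet : ∀ (z : Circle) (t : ℝ), 0 ≤ t → t ≤ 1 → (0:ℝ) < (N (γ z) t).det :=
    fun z t h0 h1 => lt_of_lt_of_le zero_lt_one (det_N_ge (γ z) t h0 h1)
  have hcz : Continuous fun p : unitInterval × Circle => (γ p.2 : SL2R) :=
    γ.continuous.comp continuous_snd
  have hct : Continuous fun p : unitInterval × Circle => (p.1 : ℝ) :=
    continuous_subtype_val.comp continuous_fst
  have hcx : Continuous fun p : unitInterval × Circle => X (γ p.2).val :=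
    cont_X.comp hcz
  have hcy : Continuous fun p : unitInterval × Circle => Y (γ p.2).val :=
    cont_Y.comp hcz
  let rotγ : C(Circle, SL2R) :=
    ⟨fun z => rotSL (γ z), (cont_rotp.comp γ.continuous).subtype_mk _⟩
  have H1 : γ.Homotopic rotγ := by
    refine ⟨⟨⟨fun p => ⟨nsl (N (γ p.2) p.1), det_nsl (hdet p.2 p.1 p.1.2.1 p.1.2.2)⟩,
      ?_⟩, ?_, ?_⟩⟩
    · apply Continuous.subtype_mk
      apply cont_nsl
      · apply Continuous.add
        · exact (continuous_const.sub hct).smul (continuous_subtype_val.comp hcz)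
        · exact hct.smul (cont_rotp.comp hcz)
      · exact fun p => hdet p.2 p.1 p.1.2.1 p.1.2.2
    · intro z
      apply Subtype.ext
      show nsl (N (γ z) ((0 : unitInterval) : ℝ)) = (γ z).val
      rw [show ((0 : unitInterval) : ℝ) = 0 by simp, N_zero, nsl_of_det_one (γ z).2]
    · intro z
      apply Subtype.ext
      show nsl (N (γ z) ((1 : unitInterval) : ℝ)) = rotp (γ z)
      rw [show ((1 : unitInterval) : ℝ) = 1 by simp, N_one,
        nsl_of_det_one (det_rotp (γ z))]
  have H2 : rotγ.Homotopic (ContinuousMap.const Circle SL1) := by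
    have hd2 : ∀ (p : unitInterval × Circle),
        0 < (mr ((1 - (p.1:ℝ)) * X (γ p.2).val + p.1)
          ((1 - (p.1:ℝ)) * Y (γ p.2).val)).det := by
      intro p
      rw [det_mr]
      exact uv2_pos hc (γ p.2) (hγ p.2) p.1.2.1 p.1.2.2
    refine ⟨⟨⟨fun p => ⟨nsl (mr ((1 - (p.1:ℝ)) * X (γ p.2).val + p.1)
        ((1 - (p.1:ℝ)) * Y (γ p.2).val)), det_nsl (hd2 p)⟩, ?_⟩, ?_, ?_⟩⟩
    · apply Continuous.subtype_mk
      apply cont_nsl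
      · apply cont_mr
        · exact ((continuous_const.sub hct).mul hcx).add hct
        · exact (continuous_const.sub hct).mul hcy
      · exact hd2
    · intro z
      apply Subtype.ext
      show nsl (mr ((1 - ((0: unitInterval) : ℝ)) * X (γ z).val + ((0: unitInterval) : ℝ))
        ((1 - ((0: unitInterval) : ℝ)) * Y (γ z).val)) = rotp (γ z)
      rw [show ((0 : unitInterval) : ℝ) = 0 by simp]
      norm_num [rotp]
    · intro z
      apply Subtype.ext
      show nsl (mr ((1 - ((1: unitInterval) : ℝ)) * X (γ z).val + ((1: unitInterval) : ℝ))
        ((1 - ((1: unitInterval) : ℝ)) * Y (γ z).val)) = SL1.val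
      rw [show ((1 : unitInterval) : ℝ) = 1 by simp]
      norm_num
      rw [nsl_of_det_one (by rw [det_mr]; norm_num), mr_one]
      rfl
  exact H1.trans H2

noncomputable def neg (A : SL2R) : SL2R :=
  ⟨-A.val, by rw [Matrix.det_neg]; simp [A.2]⟩

lemma cont_neg : Continuous neg :=
  (continuous_subtype_val.neg).subtype_mk _

lemma X_neg (A : SL2R) : X (neg A).val = - X A.val := by
  simp [neg, X, Matrix.neg_apply]; ring

lemma neg_neg' (A : SL2R) : neg (neg A) = A := Subtype.ext (by simp [neg])

end SP2


/-- For each `ω` on the unit circle, the sets `Sp(2)_ω⁺ = {A : D_A(ω) < 0}` and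
`Sp(2)_ω⁻ = {A : D_A(ω) > 0}` are path connected, and every loop contained in
one of them is freely null-homotopic in `SL(2,ℝ)`. -/
theorem sp2_omega_connected_simplyConnected (ω : ℂ) (hω : ‖ω‖ = 1) :
    IsPathConnected {A : SL2R | Dom A ω < 0} ∧
    IsPathConnected {A : SL2R | Dom A ω > 0} ∧
    (∀ γ : C(Circle, SL2R), (∀ z, Dom (γ z) ω < 0) →
      ∃ A : SL2R, ContinuousMap.Homotopic γ (ContinuousMap.const Circle A)) ∧
    (∀ γ : C(Circle, SL2R), (∀ z, Dom (γ z) ω > 0) →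
      ∃ A : SL2R, ContinuousMap.Homotopic γ (ContinuousMap.const Circle A)) := by
  have hre : |ω.re| ≤ 1 := by
    have h := Complex.abs_re_le_norm ω
    rw [hω] at h
    exact h
  rw [abs_le] at hre
  set c := 2 * ω.re with hc_def
  have hc2 : -2 ≤ c := by simp only [hc_def]; linarith [hre.1]
  have hcu : c ≤ 2 := by simp only [hc_def]; linarith [hre.2]
  have hset1 : {A : SL2R | Dom A ω < 0} = {A : SL2R | c < SP2.X A.val} := by
    ext A
    simp only [Set.mem_setOf_eq, SP2.Dom_eq A ω hω]
    constructor <;> intro h <;> [skip; skip] <;> simp only [hc_def] at * <;> linarith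
  have hset2 : {A : SL2R | Dom A ω > 0} = SP2.neg '' {A : SL2R | -c < SP2.X A.val} := by
    ext B
    simp only [Set.mem_setOf_eq, Set.mem_image]
    constructor
    · intro h
      rw [SP2.Dom_eq B ω hω] at h
      refine ⟨SP2.neg B, ?_, SP2.neg_neg' B⟩
      show -c < SP2.X (SP2.neg B).val
      rw [SP2.X_neg]
      simp only [hc_def] at *
      linarith
    · rintro ⟨A, hA, rfl⟩
      show Dom (SP2.neg A) ω > 0
      rw [SP2.Dom_eq _ ω hω, SP2.X_neg]
      simp only [hc_def] at *
      linarith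
  refine ⟨?_, ?_, ?_, ?_⟩
  · rw [hset1]
    exact SP2.key_pc c hc2 hcu
  · rw [hset2]
    exact (SP2.key_pc (-c) (by linarith) (by linarith)).image SP2.cont_neg
  · intro γ hγ
    refine ⟨SP2.SL1, SP2.key_null c hc2 γ fun z => ?_⟩
    have h := hγ z
    rw [SP2.Dom_eq _ ω hω] at h
    simp only [hc_def] at *
    linarith
  · intro γ hγ
    let negC : C(SL2R, SL2R) := ⟨SP2.neg, SP2.cont_neg⟩
    let γ' : C(Circle, SL2R) := ⟨fun z => SP2.neg (γ z), SP2.cont_neg.comp γ.continuous⟩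
    have h := SP2.key_null (-c) (by linarith) γ' fun z => by
      have h2 := hγ z
      rw [SP2.Dom_eq _ ω hω] at h2
      show -c < SP2.X (SP2.neg (γ z)).val
      rw [SP2.X_neg]
      simp only [hc_def] at *
      linarith
    have h2 := ContinuousMap.Homotopic.comp (ContinuousMap.Homotopic.refl negC) h
    have e1 : negC.comp γ' = γ := ContinuousMap.ext fun z => SP2.neg_neg' (γ z)
    have e2 : negC.comp (ContinuousMap.const Circle SP2.SL1)
        = ContinuousMap.const Circle (SP2.neg SP2.SL1) := rfl
    rw [e1, e2] at h2
    exact ⟨SP2.neg SP2.SL1, h2⟩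
end
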